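/- arXiv:1903.03936 — 5 statements merged into one kernel-verified Lean document; each statement's English description precedes it below -/
import Mathlib

section
/- Let V = {v_1,...,v_N} ⊂ ℝ^d with N = m−q, mean v̄ = (1/N)Σ v_i, satisfying ‖v_i − v̄‖² ≤ ‖v̄‖² for all i, pairwise distinct with ‖v_i − v_j‖² ≥ β² for i ≠ j, and let 0 < ε with ε²‖v̄‖² ≤ β². Set u = −ε v̄ and let U consist of q copies of u, with m − 2q = 3. If N > 2(ε+2)²/ε² + 2, then the Krum score of u is strictly less than the Krum score of every v ∈ V, so Krum(V ∪ U) = −ε v̄. -/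
/-- The Krum score of the `i`-th of `m` vectors with `q` Byzantine workers:
the sum of the squared distances from `w i` to its `m - q - 2` nearest
neighbours among the other `m - 1` vectors. -/
noncomputable def krumScore {E : Type*} [PseudoMetricSpace E] {m : ℕ} (q : ℕ)
    (w : Fin m → E) (i : Fin m) : ℝ :=
  ((((Finset.univ.erase i).val.map fun j => dist (w i) (w j) ^ 2).sort
      (· ≤ ·)).take (m - q - 2)).sum

/-!
Each Byzantine vector `u = -ε v̄` has its `q - 1` copies among its `q + 1` nearest neighbours,
so its Krum score is at most the squared distance to two correct vectors, each within
`(ε + 2)‖v̄‖` of `u` because `‖v_i - v̄‖ ≤ ‖v̄‖`. A correct vector is at distance at least `ε‖v̄‖`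
from every other vector (from the separation `β ≥ ε‖v̄‖` for correct ones, and from
`‖v_i - v̄‖ ≤ ‖v̄‖` for `u`), so its score is at least `(q + 1) ε² ‖v̄‖²`. The bound on `N` makes
`2 (ε + 2)² < (q + 1) ε²`, and `v̄ ≠ 0` because the `v_i` would otherwise all vanish.
-/

open Finset

theorem List.Sublist.sum_take_length_le {α : Type*} [AddCommMonoid α] [PartialOrder α]
    [IsOrderedAddMonoid α] {l' l : List α} (h : List.Sublist l' l) (hl : l.Pairwise (· ≤ ·)) :
    (l.take l'.length).sum ≤ l'.sum := by
  induction h with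
  | slnil => simp
  | @cons l₁ l₂ a h ih =>
    rcases l₁ with _ | ⟨b, l₁⟩
    · simp
    have hlen : l₁.length < l₂.length := by simpa using h.length_le
    have hmin : a ≤ l₂[l₁.length] := List.rel_of_pairwise_cons hl (List.getElem_mem _)
    calc a + (l₂.take l₁.length).sum ≤ (l₂.take l₁.length).sum + l₂[l₁.length] := by
          rw [add_comm]; exact add_le_add_right hmin _
      _ = (l₂.take (l₁.length + 1)).sum := (List.sum_take_succ _ _ hlen).symm
      _ ≤ (b :: l₁).sum := ih hl.of_cons
  | cons_cons a h ih =>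
    simpa using add_le_add_right (ih hl.of_cons) a

theorem Multiset.sum_take_card_sort_le {α : Type*} [AddCommMonoid α] [LinearOrder α]
    [IsOrderedAddMonoid α] {s t : Multiset α} (hts : t ≤ s) :
    ((s.sort (· ≤ ·)).take (Multiset.card t)).sum ≤ t.sum := by
  have hsub : List.Sublist (t.sort (· ≤ ·)) (s.sort (· ≤ ·)) := by
    refine List.sublist_of_subperm_of_pairwise ?_ (Multiset.pairwise_sort _ _)
      (Multiset.pairwise_sort _ _)
    rw [← Multiset.coe_le, Multiset.sort_eq, Multiset.sort_eq]
    exact hts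
  simpa [Multiset.length_sort, ← Multiset.sum_coe, Multiset.sort_eq] using
    hsub.sum_take_length_le (Multiset.pairwise_sort _ _)

section Krum

variable {E : Type*} [PseudoMetricSpace E] {m : ℕ} (q : ℕ) (w : Fin m → E)

theorem krumScore_le_sum_of_subset {i : Fin m} {A : Finset (Fin m)} (hA : A ⊆ univ.erase i)
    (hcard : #A = m - q - 2) : krumScore q w i ≤ ∑ j ∈ A, dist (w i) (w j) ^ 2 := by
  have hle : A.val.map (fun j => dist (w i) (w j) ^ 2) ≤
      (univ.erase i).val.map (fun j => dist (w i) (w j) ^ 2) :=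
    Multiset.map_le_map (Finset.val_le_iff.mpr hA)
  have := Multiset.sum_take_card_sort_le hle
  rwa [Multiset.card_map, ← Finset.card_def, hcard] at this

theorem le_krumScore (i : Fin m) {c : ℝ} (hc : ∀ j ≠ i, c ≤ dist (w i) (w j) ^ 2) :
    (m - q - 2 : ℕ) * c ≤ krumScore q w i := by
  set s := (univ.erase i).val.map fun j => dist (w i) (w j) ^ 2
  have hlen : ((s.sort (· ≤ ·)).take (m - q - 2)).length = m - q - 2 := by
    rw [List.length_take, Multiset.length_sort, Multiset.card_map, ← Finset.card_def,
      card_erase_of_mem (mem_univ i), card_univ, Fintype.card_fin]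
    omega
  have hmem : ∀ x ∈ (s.sort (· ≤ ·)).take (m - q - 2), c ≤ x := by
    intro x hx
    obtain ⟨j, hj, rfl⟩ := Multiset.mem_map.mp
      ((Multiset.mem_sort (· ≤ ·)).mp (List.take_subset _ _ hx))
    exact hc j (ne_of_mem_erase (mem_val.mp hj))
  have := List.card_nsmul_le_sum _ c hmem
  rwa [hlen, nsmul_eq_mul] at this

theorem krumScore_eq_of_eq {i i' : Fin m} (h : w i = w i') :
    krumScore q w i = krumScore q w i' := by
  set g := fun j => dist (w i') (w j) ^ 2
  have hg : ∀ k, w k = w i' → (0 : ℝ) ::ₘ (univ.erase k).val.map g = univ.val.map g := by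
    intro k hk
    rw [show (0 : ℝ) = g k by simp [g, hk], erase_val, ← Multiset.map_cons,
      Multiset.cons_erase (mem_val.mpr (mem_univ k))]
  unfold krumScore
  rw [h, (Multiset.cons_inj_right 0).mp ((hg i h).trans (hg i' rfl).symm)]

end Krum

section NegSmul

variable {E : Type*} [NormedAddCommGroup E] [NormedSpace ℝ E] {v x : E} {ε : ℝ}

theorem dist_neg_smul_le_of_norm_sub_le (hε : 0 ≤ ε) (hx : ‖x - v‖ ≤ ‖v‖) :
    dist ((-ε) • v) x ≤ (ε + 2) * ‖v‖ :=
  calc dist ((-ε) • v) x = ‖(x - v) + (1 + ε) • v‖ := by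
        rw [dist_eq_norm']; congr 1; module
    _ ≤ ‖x - v‖ + (1 + ε) * ‖v‖ := by
      grw [norm_add_le, norm_smul, Real.norm_of_nonneg (by linarith)]
    _ ≤ (ε + 2) * ‖v‖ := by linarith

theorem le_dist_neg_smul_of_norm_sub_le (hε : 0 ≤ ε) (hx : ‖x - v‖ ≤ ‖v‖) :
    ε * ‖v‖ ≤ dist ((-ε) • v) x :=
  calc ε * ‖v‖ ≤ (1 + ε) * ‖v‖ - ‖x - v‖ := by linarith
    _ = ‖(1 + ε) • v‖ - ‖-(x - v)‖ := by
      rw [norm_neg, norm_smul, Real.norm_of_nonneg (by linarith)]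
    _ ≤ ‖(1 + ε) • v - -(x - v)‖ := norm_sub_norm_le _ _
    _ = dist ((-ε) • v) x := by rw [dist_eq_norm']; congr 1; module

end NegSmul

theorem krumScore_le_two_mul_of_eq_of_dist_le {E : Type*} [PseudoMetricSpace E] {q : ℕ}
    {w : Fin (q + 3 + q) → E} {u : E} {R : ℝ}
    (hbyz : ∀ j : Fin (q + 3 + q), q + 3 ≤ (j : ℕ) → w j = u)
    (hnear : ∀ j : Fin (q + 3 + q), (j : ℕ) < 2 → dist u (w j) ^ 2 ≤ R)
    {i : Fin (q + 3 + q)} (hi : q + 3 ≤ (i : ℕ)) : krumScore q w i ≤ 2 * R := by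
  set B : Finset (Fin (q + 3 + q)) := {j | ¬ (j : ℕ) < q + 3}
  set C : Finset (Fin (q + 3 + q)) := {j | (j : ℕ) < 2}
  have hiB : i ∈ B := by simpa [B] using hi
  have hdisj : Disjoint (B.erase i) C := by
    simp only [disjoint_left, mem_erase, mem_filter, mem_univ, true_and, B, C]
    omega
  have hB : #B = q := by
    have := card_filter_add_card_filter_not (s := univ)
      (fun j : Fin (q + 3 + q) => (j : ℕ) < q + 3)
    rw [Fin.card_filter_val_lt, card_univ, Fintype.card_fin] at this
    change _ + #B = _ at this
    omega
  have hC : #C = 2 := by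
    rw [Fin.card_filter_val_lt]
    omega
  have hsub : B.erase i ∪ C ⊆ univ.erase i := by
    intro j
    simp only [mem_union, mem_erase, mem_filter, mem_univ, true_and, and_true, B, C, ne_eq,
      Fin.ext_iff]
    omega
  have hcard : #(B.erase i ∪ C) = q + 3 + q - q - 2 := by
    rw [card_union_of_disjoint hdisj, card_erase_of_mem hiB, hB, hC]
    omega
  calc krumScore q w i ≤ ∑ j ∈ B.erase i ∪ C, dist (w i) (w j) ^ 2 :=
        krumScore_le_sum_of_subset q w hsub hcard
    _ = ∑ j ∈ C, dist u (w j) ^ 2 := by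
        rw [sum_union hdisj, sum_eq_zero, zero_add, hbyz i hi]
        intro j hj
        rw [hbyz i hi, hbyz j (by simpa [B] using mem_of_mem_erase hj)]
        simp
    _ ≤ ∑ j ∈ C, R := sum_le_sum fun j hj => hnear j (by simpa [C] using hj)
    _ = 2 * R := by simp [hC]

section Attack

variable {E : Type*} [NormedAddCommGroup E] [NormedSpace ℝ E] {q : ℕ} {v : Fin (q + 3) → E}
  {vbar : E} {ε : ℝ} {w : Fin (q + 3 + q) → E}

theorem krumScore_byzantine_le
    (hbyz : ∀ j : Fin (q + 3 + q), q + 3 ≤ (j : ℕ) → w j = (-ε) • vbar)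
    (hcor : ∀ (j : Fin (q + 3 + q)) (hj : (j : ℕ) < q + 3), w j = v ⟨j, hj⟩)
    (hε : 0 ≤ ε) (hball : ∀ i, ‖v i - vbar‖ ≤ ‖vbar‖)
    {i : Fin (q + 3 + q)} (hi : q + 3 ≤ (i : ℕ)) :
    krumScore q w i ≤ 2 * ((ε + 2) * ‖vbar‖) ^ 2 := by
  refine krumScore_le_two_mul_of_eq_of_dist_le hbyz (fun j hj => ?_) hi
  rw [hcor j (by omega)]
  exact pow_le_pow_left₀ dist_nonneg (dist_neg_smul_le_of_norm_sub_le hε (hball _)) 2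

theorem le_krumScore_correct
    (hbyz : ∀ j : Fin (q + 3 + q), q + 3 ≤ (j : ℕ) → w j = (-ε) • vbar)
    (hcor : ∀ (j : Fin (q + 3 + q)) (hj : (j : ℕ) < q + 3), w j = v ⟨j, hj⟩)
    (hε : 0 ≤ ε) (hball : ∀ i, ‖v i - vbar‖ ≤ ‖vbar‖)
    (hsep : ∀ i j, i ≠ j → (ε * ‖vbar‖) ^ 2 ≤ ‖v i - v j‖ ^ 2)
    {j : Fin (q + 3 + q)} (hj : (j : ℕ) < q + 3) :
    (q + 1) * (ε * ‖vbar‖) ^ 2 ≤ krumScore q w j := by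
  have := le_krumScore q w j (c := (ε * ‖vbar‖) ^ 2) fun k hkj => ?_
  · rwa [show q + 3 + q - q - 2 = q + 1 by omega, Nat.cast_succ] at this
  rw [hcor j hj]
  rcases lt_or_ge (k : ℕ) (q + 3) with hk | hk
  · rw [hcor k hk, dist_eq_norm]
    exact hsep _ _ (by simpa [Fin.ext_iff, eq_comm] using hkj)
  · rw [hbyz k hk, dist_comm]
    exact pow_le_pow_left₀ (by positivity) (le_dist_neg_smul_of_norm_sub_le hε (hball _)) 2

end Attack

theorem krum_attack_general
    {d q : ℕ} (hq : 1 ≤ q) (v : Fin (q + 3) → EuclideanSpace ℝ (Fin d))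
    (vbar : EuclideanSpace ℝ (Fin d))
    (hball : ∀ i, ‖v i - vbar‖ ^ 2 ≤ ‖vbar‖ ^ 2)
    (β : ℝ)
    (hdistinct : ∀ i j, i ≠ j → v i ≠ v j)
    (hsep : ∀ i j, i ≠ j → β ^ 2 ≤ ‖v i - v j‖ ^ 2)
    (ε : ℝ) (hε : 0 < ε) (hεβ : ε ^ 2 * ‖vbar‖ ^ 2 ≤ β ^ 2)
    (hN : ((q : ℝ) + 3) > 2 * (ε + 2) ^ 2 / ε ^ 2 + 2)
    (w : Fin (q + 3 + q) → EuclideanSpace ℝ (Fin d))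
    (hw : w = fun i : Fin (q + 3 + q) => if h : (i : ℕ) < q + 3 then v ⟨i, h⟩ else (-ε) • vbar) :
    (∀ i : Fin (q + 3 + q), q + 3 ≤ (i : ℕ) →
      ∀ j : Fin (q + 3 + q), (j : ℕ) < q + 3 →
        krumScore q w i < krumScore q w j) ∧
    ∃ k : Fin (q + 3 + q),
      (∀ j, krumScore q w k ≤ krumScore q w j) ∧ w k = (-ε) • vbar := by
  have hbyz (j : Fin (q + 3 + q)) (hj : q + 3 ≤ (j : ℕ)) : w j = (-ε) • vbar := by
    rw [hw]; exact dif_neg (by omega)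
  have hcor (j : Fin (q + 3 + q)) (hj : (j : ℕ) < q + 3) : w j = v ⟨j, hj⟩ := by
    rw [hw]; exact dif_pos hj
  have hball' (i) : ‖v i - vbar‖ ≤ ‖vbar‖ :=
    (sq_le_sq₀ (norm_nonneg _) (norm_nonneg _)).1 (hball i)
  have hvbar : 0 < ‖vbar‖ := by
    refine norm_pos_iff.2 fun h0 => ?_
    have hzero (i) : v i = 0 := by simpa [h0] using hball' i
    exact hdistinct 0 1 (by simp) (by rw [hzero, hzero])
  have hgap : 2 * ((ε + 2) * ‖vbar‖) ^ 2 < (q + 1) * (ε * ‖vbar‖) ^ 2 := by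
    have : 2 * (ε + 2) ^ 2 / ε ^ 2 < q + 1 := by linarith
    rw [div_lt_iff₀ (by positivity)] at this
    rw [mul_pow, mul_pow, ← mul_assoc, ← mul_assoc]
    exact mul_lt_mul_of_pos_right this (by positivity)
  have hlt (i : Fin (q + 3 + q)) (hi : q + 3 ≤ (i : ℕ)) (j : Fin (q + 3 + q))
      (hj : (j : ℕ) < q + 3) : krumScore q w i < krumScore q w j :=
    (krumScore_byzantine_le hbyz hcor hε.le hball' hi).trans_lt <| hgap.trans_le <|
      le_krumScore_correct hbyz hcor hε.le hball'
        (fun i j hij => (mul_pow ε _ 2).trans_le (hεβ.trans (hsep i j hij))) hj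
  refine ⟨hlt, ⟨q + 3, by omega⟩, fun j => ?_, hbyz _ le_rfl⟩
  rcases lt_or_ge (j : ℕ) (q + 3) with hj | hj
  · exact (hlt _ le_rfl j hj).le
  · exact (krumScore_eq_of_eq q w (by rw [hbyz _ le_rfl, hbyz j hj])).le

/-- Krum attack theorem: with `m - 2q = 3`, `N = m - q = q + 3` correct
gradients `v_i` satisfying `‖v_i - v̄‖² ≤ ‖v̄‖²`, pairwise separated by
`‖v_i - v_j‖² ≥ β² > 0`, and `q` Byzantine gradients all equal to `u = -ε v̄`
with `0 < ε`, `ε²‖v̄‖² ≤ β²`, if `N > 2(ε+2)²/ε² + 2` then the Krum score of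
`u` is strictly below the Krum score of every correct gradient, so Krum
outputs `-ε v̄`. -/
theorem krum_attack
    {d q : ℕ} (hq : 1 ≤ q) (v : Fin (q + 3) → EuclideanSpace ℝ (Fin d))
    (vbar : EuclideanSpace ℝ (Fin d))
    (hvbar : vbar = ((q + 3 : ℝ))⁻¹ • ∑ i, v i)
    (hball : ∀ i, ‖v i - vbar‖ ^ 2 ≤ ‖vbar‖ ^ 2)
    (β : ℝ) (hβ : 0 < β)
    (hdistinct : ∀ i j, i ≠ j → v i ≠ v j)
    (hsep : ∀ i j, i ≠ j → β ^ 2 ≤ ‖v i - v j‖ ^ 2)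
    (ε : ℝ) (hε : 0 < ε) (hεβ : ε ^ 2 * ‖vbar‖ ^ 2 ≤ β ^ 2)
    (hN : ((q : ℝ) + 3) > 2 * (ε + 2) ^ 2 / ε ^ 2 + 2)
    (w : Fin (q + 3 + q) → EuclideanSpace ℝ (Fin d))
    (hw : w = fun i : Fin (q + 3 + q) => if h : (i : ℕ) < q + 3 then v ⟨i, h⟩ else (-ε) • vbar) :
    (∀ i : Fin (q + 3 + q), q + 3 ≤ (i : ℕ) →
      ∀ j : Fin (q + 3 + q), (j : ℕ) < q + 3 →
        krumScore q w i < krumScore q w j) ∧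
    ∃ k : Fin (q + 3 + q),
      (∀ j, krumScore q w k ≤ krumScore q w j) ∧ w k = (-ε) • vbar :=
  krum_attack_general hq v vbar hball β hdistinct hsep ε hε hεβ hN w hw
end

section
/- Suppose q ≥ 2 Byzantine vectors are all equal to u, and m − q − 4 ≥ 0 with q ≥ m − q − 2. Then among the m − q − 2 nearest neighbors of u (within the other m − 1 vectors), at least m − q − 4 have distance zero from u, so KR(u) is at most the sum of the two largest of the remaining squared distances, i.e. KR(u) ≤ 2 max_i ‖v_i − u‖². -/
open Finset

namespace List

variable {α : Type*}

theorem eq_of_mem_take_count_of_pairwise [PartialOrder α] [DecidableEq α] {l : List α} {a : α}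
    (hl : l.Pairwise (· ≤ ·)) (ha : ∀ x ∈ l, a ≤ x) {x : α} (hx : x ∈ l.take (l.count a)) :
    x = a := by
  by_cases had : a ∈ l.drop (l.count a)
  · exact le_antisymm (hl.rel_of_mem_take_of_mem_drop hx had) (ha x (take_subset _ _ hx))
  · have hcount : (l.take (l.count a)).count a = l.count a := by
      conv_rhs => rw [← take_append_drop (l.count a) l]
      rw [count_append, count_eq_zero.2 had, Nat.add_zero]
    have hlen : (l.take (l.count a)).count a = (l.take (l.count a)).length := by
      have := l.length_take_le (l.count a)
      have := count_le_length (a := a) (l := l.take (l.count a))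
      omega
    exact (count_eq_length.1 hlen x hx).symm

theorem sum_take_le_sub_count_zero_nsmul [AddCommMonoid α] [PartialOrder α] [IsOrderedAddMonoid α]
    [DecidableEq α] {l : List α} (hl : l.Pairwise (· ≤ ·)) (h0 : ∀ x ∈ l, 0 ≤ x) {M : α}
    (hM : ∀ x ∈ l, x ≤ M) (hM0 : 0 ≤ M) (n : ℕ) :
    (l.take n).sum ≤ (n - l.count 0) • M := by
  set k := l.count 0
  have hzeros : ((l.take n).take k).sum = 0 := by
    refine sum_eq_zero fun x hx => ?_
    rw [take_take] at hx
    exact eq_of_mem_take_count_of_pairwise hl h0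
      ((take_sublist_take_left (Nat.min_le_left k n)).subset hx)
  have hrest_len : ((l.take n).drop k).length ≤ n - k := by
    rw [length_drop]
    have := l.length_take_le n
    omega
  calc (l.take n).sum = ((l.take n).take k).sum + ((l.take n).drop k).sum := by
        rw [← sum_append, take_append_drop]
    _ = ((l.take n).drop k).sum := by rw [hzeros, zero_add]
    _ ≤ ((l.take n).drop k).length • M :=
        sum_le_card_nsmul _ _ fun x hx => hM x (take_subset _ _ (drop_subset _ _ hx))
    _ ≤ (n - k) • M := nsmul_le_nsmul_left hM0 hrest_len

end List

theorem krumScore_le_nsmul {E : Type*} [PseudoMetricSpace E] {m : ℕ} (q : ℕ) (w : Fin m → E)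
    (i : Fin m) {M : ℝ} (hM : ∀ j, dist (w i) (w j) ^ 2 ≤ M) :
    krumScore q w i ≤ (m - q - 2 - #{j ∈ univ.erase i | dist (w i) (w j) = 0}) • M := by
  set s := (univ.erase i).val.map fun j => dist (w i) (w j) ^ 2
  have hM0 : 0 ≤ M := by simpa using hM i
  have hzeros : #{j ∈ univ.erase i | dist (w i) (w j) = 0} ≤ (s.sort (· ≤ ·)).count 0 := by
    rw [← Multiset.coe_count, Multiset.sort_eq, Multiset.count_map]
    refine Multiset.card_le_card (Multiset.monotone_filter_right _ fun j hj => ?_)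
    simp [hj]
  refine (List.sum_take_le_sub_count_zero_nsmul (Multiset.pairwise_sort s _) ?_ ?_ hM0 _).trans
    (nsmul_le_nsmul_left hM0 (by omega))
  all_goals
    intro x hx
    obtain ⟨j, -, rfl⟩ := Multiset.mem_map.1 ((Multiset.mem_sort _).1 hx)
  exacts [sq_nonneg _, hM j]

/-- If `q ≥ 2` Byzantine vectors are all equal to `u`, with `m - q - 4 ≥ 0`
(`N ≥ 4`) and `q ≥ m - q - 2` (`q ≥ N - 2`), then among the `m - q - 2` nearest
neighbours of `u` at least `m - q - 4` are at distance zero (other copies of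
`u`), so `KR(u) ≤ 2 max_i ‖v_i - u‖²`. -/
theorem krum_score_byzantine_upper_bound
    {d N q : ℕ} (hN4 : 4 ≤ N) (hqN : N - 2 ≤ q)
    (v : Fin N → EuclideanSpace ℝ (Fin d)) (u : EuclideanSpace ℝ (Fin d))
    (w : Fin (N + q) → EuclideanSpace ℝ (Fin d))
    (hw : w = fun i : Fin (N + q) => if h : (i : ℕ) < N then v ⟨i, h⟩ else u) :
    ∀ i : Fin (N + q), N ≤ (i : ℕ) →
      krumScore q w i
        ≤ 2 * Finset.univ.sup' ⟨⟨0, by omega⟩, Finset.mem_univ _⟩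
            (fun j : Fin N => ‖v j - u‖ ^ 2) := by
  intro i hi
  set M := Finset.univ.sup' ⟨⟨0, by omega⟩, Finset.mem_univ _⟩
    (fun j : Fin N => ‖v j - u‖ ^ 2) with hM
  have hbyz : ∀ j : Fin (N + q), N ≤ (j : ℕ) → w j = u := fun j hj => by
    simp [hw, hj]
  have hM0 : 0 ≤ M := (sq_nonneg _).trans
    (Finset.le_sup' (fun j : Fin N => ‖v j - u‖ ^ 2) (Finset.mem_univ ⟨0, by omega⟩))
  have hdist : ∀ j, dist (w i) (w j) ^ 2 ≤ M := fun j => by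
    rw [hbyz i hi]
    by_cases hj : (j : ℕ) < N
    · simpa [hM, hw, hj, dist_eq_norm, norm_sub_rev] using
        Finset.le_sup' (fun j : Fin N => ‖v j - u‖ ^ 2) (Finset.mem_univ ⟨j, hj⟩)
    · simpa [hbyz j (not_lt.1 hj)] using hM0
  have hcopies : q - 1 ≤ #{j ∈ univ.erase i | dist (w i) (w j) = 0} := by
    have hi' : i ∈ Ici (⟨N, by omega⟩ : Fin (N + q)) := by simpa [Fin.le_def] using hi
    calc q - 1 = #((Ici (⟨N, by omega⟩ : Fin (N + q))).erase i) := by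
          rw [card_erase_of_mem hi', Fin.card_Ici]; simp
      _ ≤ _ := card_le_card fun j hj => by
          obtain ⟨hji, hj⟩ := mem_erase.1 hj
          simp [hji, hbyz i hi, hbyz j (by simpa [Fin.le_def] using hj)]
  calc krumScore q w i ≤ (N + q - q - 2 - #{j ∈ univ.erase i | dist (w i) (w j) = 0}) • M :=
        krumScore_le_nsmul q w i hdist
    _ ≤ 2 • M := nsmul_le_nsmul_left hM0 (by omega)
    _ = 2 * M := (two_nsmul M).trans (two_mul M).symm
end

section
/- Let v_1,...,v_N ∈ ℝ^d satisfy ‖v_i − v_j‖² ≥ β² for all i ≠ j, and let the q Byzantine vectors all equal u with ‖v_i − u‖² ≥ ε²‖v̄‖² for all i, where ε²‖v̄‖² ≤ β². Then for every correct vector v_i, its Krum score satisfies KR(v_i) ≥ (m − q − 2) ε² ‖v̄‖². -/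
theorem le_krumScore_of_forall_le {E : Type*} [PseudoMetricSpace E] {m : ℕ} (q : ℕ)
    (w : Fin m → E) (i : Fin m) (c : ℝ) (h : ∀ j, j ≠ i → c ≤ dist (w i) (w j) ^ 2) :
    ((m - q - 2 : ℕ) : ℝ) * c ≤ krumScore q w i := by
  unfold krumScore
  refine le_of_eq_of_le ?_ (List.card_nsmul_le_sum _ c fun x hx => ?_)
  · rw [nsmul_eq_mul, List.length_take, Multiset.length_sort, Multiset.card_map,
      Finset.card_val, Finset.card_erase_of_mem (Finset.mem_univ i), Finset.card_univ,
      Fintype.card_fin, min_eq_left (by omega)]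
  obtain ⟨j, hj, rfl⟩ := Multiset.mem_map.mp ((Multiset.mem_sort _).mp (List.mem_of_mem_take hx))
  exact h j (Finset.ne_of_mem_erase (Finset.mem_val.mp hj))

theorem krum_score_correct_lower_bound_general
    {d N q : ℕ}
    (v : Fin N → EuclideanSpace ℝ (Fin d))
    (vbar : EuclideanSpace ℝ (Fin d))
    (β ε : ℝ)
    (hsep : ∀ i j, i ≠ j → β ^ 2 ≤ ‖v i - v j‖ ^ 2)
    (u : EuclideanSpace ℝ (Fin d))
    (hu : ∀ i, ε ^ 2 * ‖vbar‖ ^ 2 ≤ ‖v i - u‖ ^ 2)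
    (hεβ : ε ^ 2 * ‖vbar‖ ^ 2 ≤ β ^ 2)
    (w : Fin (N + q) → EuclideanSpace ℝ (Fin d))
    (hw : w = fun i : Fin (N + q) => if h : (i : ℕ) < N then v ⟨i, h⟩ else u) :
    ∀ j : Fin (N + q), (j : ℕ) < N →
      ((N - 2 : ℕ) : ℝ) * (ε ^ 2 * ‖vbar‖ ^ 2) ≤ krumScore q w j := by
  intro j hj
  have hscore := le_krumScore_of_forall_le q w j (ε ^ 2 * ‖vbar‖ ^ 2) fun k hkj => ?_
  · rwa [Nat.add_sub_cancel] at hscore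
  subst hw
  simp only [hj, dite_true, dist_eq_norm]
  split_ifs with hk
  · exact hεβ.trans <| hsep _ _ fun h => hkj (Fin.ext (Fin.mk.inj_iff.mp h).symm)
  · exact hu _

/-- If the correct gradients are pairwise separated by `‖v_i - v_j‖² ≥ β²`, the
`q` Byzantine vectors all equal `u` with `‖v_i - u‖² ≥ ε²‖v̄‖²` for all `i`, and
`ε²‖v̄‖² ≤ β²`, then the Krum score of every correct vector is at least
`(m - q - 2) ε² ‖v̄‖²` (here `m = N + q`, so `m - q - 2 = N - 2`). -/
theorem krum_score_correct_lower_bound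
    {d N q : ℕ} (hN : 2 ≤ N)
    (v : Fin N → EuclideanSpace ℝ (Fin d))
    (vbar : EuclideanSpace ℝ (Fin d))
    (hvbar : vbar = ((N : ℝ))⁻¹ • ∑ i, v i)
    (β ε : ℝ) (hε : 0 < ε)
    (hsep : ∀ i j, i ≠ j → β ^ 2 ≤ ‖v i - v j‖ ^ 2)
    (u : EuclideanSpace ℝ (Fin d))
    (hu : ∀ i, ε ^ 2 * ‖vbar‖ ^ 2 ≤ ‖v i - u‖ ^ 2)
    (hεβ : ε ^ 2 * ‖vbar‖ ^ 2 ≤ β ^ 2)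
    (w : Fin (N + q) → EuclideanSpace ℝ (Fin d))
    (hw : w = fun i : Fin (N + q) => if h : (i : ℕ) < N then v ⟨i, h⟩ else u) :
    ∀ j : Fin (N + q), (j : ℕ) < N →
      ((N - 2 : ℕ) : ℝ) * (ε ^ 2 * ‖vbar‖ ^ 2) ≤ krumScore q w j :=
  krum_score_correct_lower_bound_general v vbar β ε hsep u hu hεβ w hw
end

section
/- Coordinate-wise median commutes with the attack construction: if for each coordinate j the Byzantine scalar values are all strictly less than the minimum of the correct j-th coordinates whenever the correct mean's j-th coordinate is positive (and strictly greater than the maximum if it is negative), then for each such coordinate j, the j-th coordinate of Median(V ∪ U) equals min_i (v_i)_j (resp. max_i (v_i)_j), where |V| = q+1 and |U| = q. -/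
/-- The median of a multiset of reals: the middle element
(for a multiset of cardinality `2q+1`, the `(q+1)`-st smallest element). -/
noncomputable def medianMultiset (s : Multiset ℝ) : ℝ :=
  (s.sort (· ≤ ·)).getD (s.card / 2) 0

/-!
If every Byzantine value lies strictly below every correct value, sorting `V ∪ U` lists the `q`
Byzantine values first and then the `q + 1` correct ones, so the middle entry (index `q`) is the
smallest correct value. If they all lie strictly above, the correct values come first and the
middle entry is the last of them, their maximum.
-/

namespace Multiset

variable {α : Type*} [LinearOrder α]

theorem sort_add_eq_append_of_forall_lt {A B : Multiset α} (h : ∀ b ∈ B, ∀ a ∈ A, b < a) :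
    (A + B).sort (· ≤ ·) = B.sort (· ≤ ·) ++ A.sort (· ≤ ·) := by
  refine List.Perm.eq_of_pairwise' (pairwise_sort _ _) ?_ ?_
  · rw [List.pairwise_append]
    exact ⟨pairwise_sort _ _, pairwise_sort _ _, fun b hb a ha =>
      (h b ((mem_sort _).1 hb) a ((mem_sort _).1 ha)).le⟩
  · rw [← coe_eq_coe, ← coe_add, sort_eq, sort_eq, sort_eq, add_comm]

theorem isLeast_head_sort {A : Multiset α} (h : A.sort (· ≤ ·) ≠ []) :
    IsLeast {a | a ∈ A} ((A.sort (· ≤ ·)).head h) :=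
  ⟨(mem_sort _).1 (List.head_mem h),
    fun _ ha => (pairwise_sort _ _).rel_head ((mem_sort _).2 ha)⟩

theorem isGreatest_getLast_sort {A : Multiset α} (h : A.sort (· ≤ ·) ≠ []) :
    IsGreatest {a | a ∈ A} ((A.sort (· ≤ ·)).getLast h) :=
  ⟨(mem_sort _).1 (List.getLast_mem h),
    fun _ ha => (pairwise_sort _ _).rel_getLast ((mem_sort _).2 ha)⟩

end Multiset

open Multiset

section

variable {A B : Multiset ℝ}

theorem isLeast_medianMultiset_add (hBA : ∀ b ∈ B, ∀ a ∈ A, b < a)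
    (hcard : A.card = B.card + 1) : IsLeast {a | a ∈ A} (medianMultiset (A + B)) := by
  have hne : A.sort (· ≤ ·) ≠ [] := List.ne_nil_of_length_pos (by simp [hcard])
  have hidx : (A + B).card / 2 = (B.sort (· ≤ ·)).length := by simp; omega
  have hmed : medianMultiset (A + B) = (A.sort (· ≤ ·)).head hne := by
    rw [medianMultiset, sort_add_eq_append_of_forall_lt hBA, hidx,
      List.getD_append_right _ _ _ _ le_rfl, Nat.sub_self, List.head_eq_getElem,
      List.getD_eq_getElem]
  exact hmed ▸ isLeast_head_sort hne

theorem isGreatest_medianMultiset_add (hAB : ∀ a ∈ A, ∀ b ∈ B, a < b)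
    (hcard : A.card = B.card + 1) : IsGreatest {a | a ∈ A} (medianMultiset (A + B)) := by
  have hne : A.sort (· ≤ ·) ≠ [] := List.ne_nil_of_length_pos (by simp [hcard])
  have hidx : (A + B).card / 2 = (A.sort (· ≤ ·)).length - 1 := by simp; omega
  have hmed : medianMultiset (A + B) = (A.sort (· ≤ ·)).getLast hne := by
    rw [medianMultiset, add_comm, sort_add_eq_append_of_forall_lt hAB, add_comm, hidx,
      List.getD_append _ _ _ _ (by simp [hcard]), List.getLast_eq_getElem,
      List.getD_eq_getElem]
  exact hmed ▸ isGreatest_getLast_sort hne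

end

theorem coordinatewise_median_attack_general
    {d q : ℕ} (v : Fin (q + 1) → Fin d → ℝ) (u : Fin q → Fin d → ℝ)
    (gbar : Fin d → ℝ) (j : Fin d) :
    (0 < gbar j → (∀ k i, u k j < v i j) →
      medianMultiset
          ((↑(List.ofFn fun i => v i j) : Multiset ℝ)
            + (↑(List.ofFn fun k => u k j) : Multiset ℝ))
        = Finset.univ.inf' ⟨0, Finset.mem_univ 0⟩ fun i => v i j) ∧
    (gbar j < 0 → (∀ k i, v i j < u k j) →
      medianMultiset
          ((↑(List.ofFn fun i => v i j) : Multiset ℝ)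
            + (↑(List.ofFn fun k => u k j) : Multiset ℝ))
        = Finset.univ.sup' ⟨0, Finset.mem_univ 0⟩ fun i => v i j) := by
  have hcard : card (↑(List.ofFn fun i => v i j) : Multiset ℝ)
      = card (↑(List.ofFn fun k => u k j) : Multiset ℝ) + 1 := by simp
  have hrange : {a | a ∈ (↑(List.ofFn fun i => v i j) : Multiset ℝ)} = Set.range (v · j) :=
    Set.ext fun a => List.mem_ofFn' _ a
  refine ⟨fun _ hlt => ?_, fun _ hlt => ?_⟩
  · have hleast := isLeast_medianMultiset_add
      (by simpa only [mem_coe, List.forall_mem_ofFn_iff] using hlt) hcard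
    rw [hrange] at hleast
    rw [Finset.inf'_univ_eq_ciInf, ← sInf_range, hleast.csInf_eq]
  · have hgreatest := isGreatest_medianMultiset_add
      (by simpa only [mem_coe, List.forall_mem_ofFn_iff] using fun i k => hlt k i) hcard
    rw [hrange] at hgreatest
    rw [Finset.sup'_univ_eq_ciSup, ← sSup_range, hgreatest.csSup_eq]

/-- Coordinate-wise median under the attack construction: with `q+1` correct
vectors `v_i` and `q` Byzantine vectors `u_k`, for a coordinate `j` where the
correct mean is positive and all Byzantine values are strictly below all
correct values, the `j`-th coordinate of `Median(V ∪ U)` is `min_i (v_i)_j`;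
symmetrically, where the correct mean is negative and all Byzantine values are
strictly above, it is `max_i (v_i)_j`. -/
theorem coordinatewise_median_attack
    {d q : ℕ} (v : Fin (q + 1) → Fin d → ℝ) (u : Fin q → Fin d → ℝ)
    (gbar : Fin d → ℝ)
    (hgbar : gbar = fun j => (∑ i, v i j) / (q + 1)) (j : Fin d) :
    (0 < gbar j → (∀ k i, u k j < v i j) →
      medianMultiset
          ((↑(List.ofFn fun i => v i j) : Multiset ℝ)
            + (↑(List.ofFn fun k => u k j) : Multiset ℝ))
        = Finset.univ.inf' ⟨0, Finset.mem_univ 0⟩ fun i => v i j) ∧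
    (gbar j < 0 → (∀ k i, v i j < u k j) →
      medianMultiset
          ((↑(List.ofFn fun i => v i j) : Multiset ℝ)
            + (↑(List.ofFn fun k => u k j) : Multiset ℝ))
        = Finset.univ.sup' ⟨0, Finset.mem_univ 0⟩ fun i => v i j) :=
  coordinatewise_median_attack_general v u gbar j
end

section
/- Suppose the q Byzantine vectors are identical copies of u and q ≥ m − q − 2 ≥ 1. If additionally for all correct v_i we have KR(v_i) > KR(u), then the Krum aggregation outputs u, and hence if u = −ε v̄ with E[v̄] = g ≠ 0 and ε > 0, then ⟨g, E[Krum(V ∪ U)]⟩ = −ε‖g‖² < 0. -/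
open MeasureTheory

theorem Finite.exists_min_mem_of_lt_of_notMem {ι α : Type*} [Finite ι] [LinearOrder α]
    (f : ι → α) (S : Set ι) (hS : S.Nonempty) (h : ∀ i ∈ S, ∀ j ∉ S, f i < f j) :
    ∃ k ∈ S, ∀ j, f k ≤ f j := by
  obtain ⟨i, hi⟩ := hS
  have : Nonempty ι := ⟨i⟩
  obtain ⟨k, hk⟩ := Finite.exists_min f
  refine ⟨k, ?_, hk⟩
  by_contra hkS
  exact (h i hi k hkS).not_ge (hk i)

theorem krum_outputs_byzantine_general
    {Ω : Type*} [MeasureSpace Ω]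
    {d N q : ℕ} (hN : 3 ≤ N) (hqN : N - 2 ≤ q)
    (v : Fin N → Ω → EuclideanSpace ℝ (Fin d))
    (vbar : Ω → EuclideanSpace ℝ (Fin d))
    (g : EuclideanSpace ℝ (Fin d)) (hg : ∫ ω : Ω, vbar ω ∂(volume : Measure Ω) = g) (hg0 : g ≠ 0)
    (ε : ℝ) (hε : 0 < ε)
    (w : Ω → Fin (N + q) → EuclideanSpace ℝ (Fin d))
    (hw : w = fun ω (i : Fin (N + q)) =>
      if h : (i : ℕ) < N then v ⟨i, h⟩ ω else (-ε) • vbar ω)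
    (hscore : ∀ ω, ∀ i : Fin (N + q), N ≤ (i : ℕ) →
      ∀ j : Fin (N + q), (j : ℕ) < N →
        krumScore q (w ω) i < krumScore q (w ω) j)
    (krumExp : EuclideanSpace ℝ (Fin d))
    (hkrumExp : krumExp = ∫ ω : Ω, (-ε) • vbar ω ∂(volume : Measure Ω)) :
    (∀ ω, ∃ k : Fin (N + q),
        (∀ j, krumScore q (w ω) k ≤ krumScore q (w ω) j) ∧
        w ω k = (-ε) • vbar ω) ∧
    (inner ℝ g krumExp : ℝ) = -ε * ‖g‖ ^ 2 ∧
    (inner ℝ g krumExp : ℝ) < 0 := by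
  have hq : N < N + q := by omega
  have hmean : krumExp = (-ε) • g := by rw [hkrumExp, integral_smul, hg]
  have hinner : (inner ℝ g krumExp : ℝ) = -ε * ‖g‖ ^ 2 := by
    rw [hmean, real_inner_smul_right, real_inner_self_eq_norm_sq]
  refine ⟨fun ω => ?_, hinner, ?_⟩
  · obtain ⟨k, hkN, hk⟩ := Finite.exists_min_mem_of_lt_of_notMem (krumScore q (w ω))
      {i | N ≤ (i : ℕ)} ⟨⟨N, hq⟩, le_refl N⟩ fun i hi j hj => hscore ω i hi j (not_le.mp hj)
    refine ⟨k, hk, ?_⟩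
    rw [hw]
    exact dif_neg (not_lt.mpr hkN)
  · rw [hinner, neg_mul, neg_lt_zero]
    exact mul_pos hε (pow_pos (norm_pos_iff.mpr hg0) 2)

/-- If the `q` Byzantine vectors are identical copies of `u = -ε v̄` with
`q ≥ m - q - 2 ≥ 1`, and every correct vector has strictly larger Krum score
than `u`, then Krum outputs `u`; hence with `E[v̄] = g ≠ 0` and `ε > 0`, the
expected Krum output `E[Krum(V ∪ U)] = E[-ε v̄]` satisfies
`⟨g, E[Krum(V ∪ U)]⟩ = -ε‖g‖² < 0`. -/
theorem krum_outputs_byzantine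
    {Ω : Type*} [MeasureSpace Ω] [IsProbabilityMeasure (volume : Measure Ω)]
    {d N q : ℕ} (hN : 3 ≤ N) (hqN : N - 2 ≤ q)
    (v : Fin N → Ω → EuclideanSpace ℝ (Fin d))
    (vbar : Ω → EuclideanSpace ℝ (Fin d))
    (hvbar : vbar = fun ω => ((N : ℝ))⁻¹ • ∑ i, v i ω)
    (hint : Integrable vbar (volume : Measure Ω))
    (g : EuclideanSpace ℝ (Fin d)) (hg : ∫ ω : Ω, vbar ω ∂(volume : Measure Ω) = g) (hg0 : g ≠ 0)
    (ε : ℝ) (hε : 0 < ε)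
    (w : Ω → Fin (N + q) → EuclideanSpace ℝ (Fin d))
    (hw : w = fun ω (i : Fin (N + q)) =>
      if h : (i : ℕ) < N then v ⟨i, h⟩ ω else (-ε) • vbar ω)
    (hscore : ∀ ω, ∀ i : Fin (N + q), N ≤ (i : ℕ) →
      ∀ j : Fin (N + q), (j : ℕ) < N →
        krumScore q (w ω) i < krumScore q (w ω) j)
    (krumExp : EuclideanSpace ℝ (Fin d))
    (hkrumExp : krumExp = ∫ ω : Ω, (-ε) • vbar ω ∂(volume : Measure Ω)) :
    (∀ ω, ∃ k : Fin (N + q),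
        (∀ j, krumScore q (w ω) k ≤ krumScore q (w ω) j) ∧
        w ω k = (-ε) • vbar ω) ∧
    (inner ℝ g krumExp : ℝ) = -ε * ‖g‖ ^ 2 ∧
    (inner ℝ g krumExp : ℝ) < 0 :=
  krum_outputs_byzantine_general hN hqN v vbar g hg hg0 ε hε w hw hscore krumExp hkrumExp
end
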